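/- arXiv:1402.0858 — 4 statements merged into one kernel-verified Lean document; each statement's English description precedes it below -/
import Mathlib

section
/- Let K be a compact topological space and f : K → ℝⁿ a continuous function that has a root. Then the set {α ≥ 0 : every continuous α-perturbation of f has a root} is nonempty, bounded above, and closed, and hence attains a maximum rob(f). -/
/-!
A single continuous root-free `g` with `‖f - g‖ ≤ β` pushes every robust level below `β`:
this bounds the set (take `g` a nonzero constant) and gives closedness. If a limit level
`α > 0` were not robust, some root-free `g` would lie within `α` of `f`; by compactness
`‖g‖ ≥ ε > 0`, so moving `g` a fraction `t = ε / (ε + α)` of the way towards `f` keeps it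
root-free while bringing it within `(1 - t) α < α` of `f`.
-/

open Set

section Robustness

variable {K E : Type*} [TopologicalSpace K] [NormedAddCommGroup E]

def robustnessSet (f : K → E) : Set ℝ :=
  {α : ℝ | 0 ≤ α ∧ ∀ g : K → E, Continuous g → (∀ x, ‖f x - g x‖ ≤ α) → ∃ x, g x = 0}

variable {f g : K → E}

theorem zero_mem_robustnessSet (hroot : ∃ x, f x = 0) : (0 : ℝ) ∈ robustnessSet f := by
  refine ⟨le_rfl, fun g _ hfg => ?_⟩
  obtain ⟨x, hx⟩ := hroot
  refine ⟨x, ?_⟩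
  have hfgx : f x = g x := norm_sub_eq_zero_iff.mp (le_antisymm (hfg x) (norm_nonneg _))
  rw [← hfgx, hx]

theorem robustnessSet_subset_Iio {β : ℝ} (hg : Continuous g) (hg0 : ∀ x, g x ≠ 0)
    (hfg : ∀ x, ‖f x - g x‖ ≤ β) : robustnessSet f ⊆ Iio β := by
  intro α hα
  rw [mem_Iio]
  by_contra! hβα
  obtain ⟨x, hx⟩ := hα.2 g hg fun x => (hfg x).trans hβα
  exact hg0 x hx

theorem bddAbove_robustnessSet [CompactSpace K] [Nontrivial E] (hf : Continuous f) :
    BddAbove (robustnessSet f) := by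
  obtain ⟨C, hC⟩ := (isCompact_range hf.norm).bddAbove
  obtain ⟨v, hv⟩ := exists_ne (0 : E)
  refine ⟨C + ‖v‖, (robustnessSet_subset_Iio continuous_const (fun _ => hv) fun x => ?_).trans
    Iio_subset_Iic_self⟩
  exact (norm_sub_le _ _).trans (add_le_add_left (hC (mem_range_self x)) _)

theorem exists_pos_le_norm [CompactSpace K] (hg : Continuous g) (hg0 : ∀ x, g x ≠ 0) :
    ∃ ε > 0, ∀ x, ε ≤ ‖g x‖ := by
  obtain ⟨ε, hε, hεg⟩ := isCompact_univ.exists_forall_le' hg.norm.continuousOn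
    fun x _ => norm_pos_iff.mpr (hg0 x)
  exact ⟨ε, hε, fun x => hεg x (mem_univ x)⟩

variable [NormedSpace ℝ E]

theorem exists_root_free_closer [CompactSpace K] {α : ℝ} (hα : 0 < α)
    (hf : Continuous f) (hg : Continuous g) (hg0 : ∀ x, g x ≠ 0)
    (hfg : ∀ x, ‖f x - g x‖ ≤ α) :
    ∃ β < α, ∃ g' : K → E, Continuous g' ∧ (∀ x, g' x ≠ 0) ∧ ∀ x, ‖f x - g' x‖ ≤ β := by
  obtain ⟨ε, hε, hεg⟩ := exists_pos_le_norm hg hg0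
  set t := ε / (ε + α)
  have ht : 0 < t := by positivity
  have htα : t * α < ε := by
    rw [div_mul_eq_mul_div, div_lt_iff₀ (by positivity)]
    nlinarith
  have ht1 : t < 1 := (div_lt_one (by positivity)).mpr (by linarith)
  refine ⟨(1 - t) * α, by nlinarith, fun x => g x + t • (f x - g x),
    hg.add ((hf.sub hg).const_smul t), fun x hx => ?_, fun x => ?_⟩
  · have hmove : ‖t • (f x - g x)‖ ≤ t * α := by
      rw [norm_smul, Real.norm_of_nonneg ht.le]
      exact mul_le_mul_of_nonneg_left (hfg x) ht.le
    have hlow : ‖g x‖ - ‖t • (f x - g x)‖ ≤ 0 := by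
      simpa [hx] using norm_sub_norm_le (g x) (-(t • (f x - g x)))
    linarith [hεg x]
  · have hrest : f x - (g x + t • (f x - g x)) = (1 - t) • (f x - g x) := by
      rw [sub_smul, one_smul]; abel
    rw [hrest, norm_smul, Real.norm_of_nonneg (by linarith)]
    exact mul_le_mul_of_nonneg_left (hfg x) (by linarith)

theorem isClosed_robustnessSet [CompactSpace K] (hf : Continuous f) (hroot : ∃ x, f x = 0) :
    IsClosed (robustnessSet f) := by
  refine isClosed_of_closure_subset fun α hα => ?_
  have hα0 : 0 ≤ α := closure_minimal (fun β hβ => hβ.1) isClosed_Ici hα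
  by_contra hαS
  have hαpos : 0 < α :=
    hα0.lt_of_ne fun h => hαS (h ▸ zero_mem_robustnessSet hroot)
  obtain ⟨g, hg, hfg, hg0⟩ : ∃ g : K → E, Continuous g ∧ (∀ x, ‖f x - g x‖ ≤ α) ∧
      ∀ x, g x ≠ 0 := by
    simpa [robustnessSet, hα0] using hαS
  obtain ⟨β, hβα, g', hg', hg'0, hfg'⟩ := exists_root_free_closer hαpos hf hg hg0 hfg
  have hαβ : α ≤ β :=
    closure_minimal ((robustnessSet_subset_Iio hg' hg'0 hfg').trans Iio_subset_Iic_self)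
      isClosed_Iic hα
  linarith

end Robustness

theorem stmt_2_general {K : Type*} [TopologicalSpace K] [CompactSpace K]
    {E : Type*} [NormedAddCommGroup E] [NormedSpace ℝ E]
    [Nontrivial E]
    (f : K → E) (hf : Continuous f) (hroot : ∃ x, f x = 0) :
    ({α : ℝ | 0 ≤ α ∧
        ∀ g : K → E, Continuous g → (∀ x, ‖f x - g x‖ ≤ α) → ∃ x, g x = 0}).Nonempty ∧
    BddAbove {α : ℝ | 0 ≤ α ∧
        ∀ g : K → E, Continuous g → (∀ x, ‖f x - g x‖ ≤ α) → ∃ x, g x = 0} ∧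
    IsClosed {α : ℝ | 0 ≤ α ∧
        ∀ g : K → E, Continuous g → (∀ x, ‖f x - g x‖ ≤ α) → ∃ x, g x = 0} ∧
    ∃ M : ℝ, IsGreatest {α : ℝ | 0 ≤ α ∧
        ∀ g : K → E, Continuous g → (∀ x, ‖f x - g x‖ ≤ α) → ∃ x, g x = 0} M := by
  have hne : (robustnessSet f).Nonempty := ⟨0, zero_mem_robustnessSet hroot⟩
  have hbdd := bddAbove_robustnessSet hf
  have hclosed := isClosed_robustnessSet hf hroot
  exact ⟨hne, hbdd, hclosed, _, hclosed.isGreatest_csSup hne hbdd⟩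

/-- If `f` on a compact space has a root, the set of `α ≥ 0` such that every continuous
`α`-perturbation of `f` has a root is nonempty, bounded above and closed, hence has
a maximum `rob(f)`. -/
theorem stmt_2 {K : Type*} [TopologicalSpace K] [CompactSpace K]
    {E : Type*} [NormedAddCommGroup E] [NormedSpace ℝ E] [FiniteDimensional ℝ E]
    [Nontrivial E]
    (f : K → E) (hf : Continuous f) (hroot : ∃ x, f x = 0) :
    ({α : ℝ | 0 ≤ α ∧
        ∀ g : K → E, Continuous g → (∀ x, ‖f x - g x‖ ≤ α) → ∃ x, g x = 0}).Nonempty ∧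
    BddAbove {α : ℝ | 0 ≤ α ∧
        ∀ g : K → E, Continuous g → (∀ x, ‖f x - g x‖ ≤ α) → ∃ x, g x = 0} ∧
    IsClosed {α : ℝ | 0 ≤ α ∧
        ∀ g : K → E, Continuous g → (∀ x, ‖f x - g x‖ ≤ α) → ∃ x, g x = 0} ∧
    ∃ M : ℝ, IsGreatest {α : ℝ | 0 ≤ α ∧
        ∀ g : K → E, Continuous g → (∀ x, ‖f x - g x‖ ≤ α) → ∃ x, g x = 0} M :=
  stmt_2_general f hf hroot
end

section
/- Let K be a compact space, f : K → ℝⁿ continuous with a root, and α > 0. Then f has an α-robust root (every α-perturbation of f has a root) if and only if the restriction f|_{‖f‖⁻¹{α}} : ‖f‖⁻¹{α} → ℝⁿ \ {0} admits no continuous extension F : ‖f‖⁻¹[0,α] → ℝⁿ \ {0}. -/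
/-!
If a nonvanishing extension `F` of `f|_{‖f‖ = α}` exists (extended to all of `K` by Tietze),
then `f - r (f - F)`, with `r` the radial retraction of `E` onto the closed `α`-ball, is an
`α`-perturbation of `f` without a root.

Conversely, let `g` be a rootless `α`-perturbation and consider the straight-line homotopy
`f - t (f - g)`, `t ∈ [0, 1]`. Its zero set `Z ⊆ K` is closed (`[0, 1]` is compact) and misses
`{‖f‖ = α}`, so an Urysohn function `τ` equal to `1` on `Z` and `0` on `{‖f‖ = α}` gives the
nonvanishing extension `f - τ (f - g)`.
-/

open Set

section RadialRetraction

variable {E : Type*} [NormedAddCommGroup E] [NormedSpace ℝ E] {α : ℝ}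

noncomputable def radialRetraction (α : ℝ) (v : E) : E := (α / max α ‖v‖) • v

lemma continuous_radialRetraction (hα : 0 < α) : Continuous (radialRetraction α : E → E) :=
  ((continuous_const.div (continuous_const.max continuous_norm)) fun _ =>
    (hα.trans_le (le_max_left _ _)).ne').smul continuous_id

lemma norm_radialRetraction (hα : 0 < α) (v : E) :
    ‖radialRetraction α v‖ = α * (‖v‖ / max α ‖v‖) := by
  rw [radialRetraction, norm_smul, Real.norm_of_nonneg
    (div_nonneg hα.le (hα.le.trans (le_max_left _ _))), mul_div_assoc', div_mul_eq_mul_div]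

lemma norm_radialRetraction_le (hα : 0 < α) (v : E) : ‖radialRetraction α v‖ ≤ α := by
  rw [norm_radialRetraction hα]
  exact mul_le_of_le_one_right hα.le
    (div_le_one_of_le₀ (le_max_right _ _) (hα.le.trans (le_max_left _ _)))

lemma radialRetraction_of_norm_le (hα : 0 < α) {v : E} (hv : ‖v‖ ≤ α) :
    radialRetraction α v = v := by
  rw [radialRetraction, max_eq_left hv, div_self hα.ne', one_smul]

lemma norm_radialRetraction_of_le_norm (hα : 0 < α) {v : E} (hv : α ≤ ‖v‖) :
    ‖radialRetraction α v‖ = α := by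
  rw [norm_radialRetraction hα, max_eq_right hv, div_self (hα.trans_le hv).ne', mul_one]

end RadialRetraction

section Criterion

variable {K : Type*} {E : Type*} [NormedAddCommGroup E] [NormedSpace ℝ E] {f : K → E} {α : ℝ}

def homotopyZeroSet (f g : K → E) : Set K :=
  {x | ∃ t ∈ Icc (0 : ℝ) 1, f x = t • (f x - g x)}

lemma homotopyZeroSet_disjoint_levelSet {g : K → E} (hα : 0 < α)
    (hfg : ∀ x, ‖f x - g x‖ ≤ α) (hg0 : ∀ x, g x ≠ 0) :
    Disjoint (homotopyZeroSet f g) {x | ‖f x‖ = α} := by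
  refine disjoint_left.mpr fun x ⟨t, ⟨ht0, ht1⟩, hx⟩ (hfx : ‖f x‖ = α) => hg0 x ?_
  have hnorm : α = t * ‖f x - g x‖ := by
    rw [← hfx, ← Real.norm_of_nonneg ht0, ← norm_smul, ← hx]
  have ht : t = 1 := by nlinarith [hfg x]
  rw [ht, one_smul] at hx
  exact sub_eq_self.mp hx.symm

variable [TopologicalSpace K]

lemma isClosed_homotopyZeroSet {g : K → E} (hf : Continuous f) (hg : Continuous g) :
    IsClosed (homotopyZeroSet f g) := by
  have hC : IsClosed {p : K × Icc (0 : ℝ) 1 | f p.1 = (p.2 : ℝ) • (f p.1 - g p.1)} :=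
    isClosed_eq (by fun_prop) (by fun_prop)
  convert isClosedMap_fst_of_compactSpace _ hC using 1
  ext x
  simp [homotopyZeroSet]

theorem exists_extension_of_rootless_perturbation [NormalSpace K] (hf : Continuous f)
    (hα : 0 < α) {g : K → E} (hg : Continuous g) (hfg : ∀ x, ‖f x - g x‖ ≤ α)
    (hg0 : ∀ x, g x ≠ 0) :
    ∃ F : K → E, Continuous F ∧ (∀ x, F x ≠ 0) ∧ ∀ x, ‖f x‖ = α → F x = f x := by
  obtain ⟨τ, hτS, hτZ, hτ01⟩ := exists_continuous_zero_one_of_isClosed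
    (isClosed_eq (by fun_prop) continuous_const) (isClosed_homotopyZeroSet hf hg)
    (homotopyZeroSet_disjoint_levelSet hα hfg hg0).symm
  refine ⟨fun x => f x - τ x • (f x - g x), by fun_prop, fun x hx => hg0 x ?_, fun x hx => ?_⟩
  · have hxZ : x ∈ homotopyZeroSet f g := ⟨τ x, hτ01 x, sub_eq_zero.mp hx⟩
    simpa [hτZ hxZ] using hx
  · simp [hτS hx]

theorem exists_rootless_perturbation_of_extension (hf : Continuous f) (hα : 0 < α) {F : K → E}
    (hF : Continuous F) (hF0 : ∀ x, ‖f x‖ ≤ α → F x ≠ 0) (hFf : ∀ x, ‖f x‖ = α → F x = f x) :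
    ∃ g : K → E, Continuous g ∧ (∀ x, ‖f x - g x‖ ≤ α) ∧ ∀ x, g x ≠ 0 := by
  refine ⟨fun x => f x - radialRetraction α (f x - F x),
    hf.sub ((continuous_radialRetraction hα).comp (hf.sub hF)),
    fun x => by simpa using norm_radialRetraction_le hα (f x - F x), fun x hx => ?_⟩
  have hfx : f x = radialRetraction α (f x - F x) := sub_eq_zero.mp hx
  have hfα : ‖f x‖ ≤ α := hfx ▸ norm_radialRetraction_le hα _
  rcases le_or_gt ‖f x - F x‖ α with hle | hlt
  · rw [radialRetraction_of_norm_le hα hle] at hfx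
    exact hF0 x hfα (sub_eq_self.mp hfx.symm)
  · have hFx : F x = f x := hFf x (hfx ▸ norm_radialRetraction_of_le_norm hα hlt.le)
    rw [hFx, sub_self, norm_zero] at hlt
    exact hlt.not_ge hα.le

theorem exists_sublevelSet_extension_iff [NormalSpace K] [FiniteDimensional ℝ E]
    (hf : Continuous f) :
    (∃ F : {x : K // ‖f x‖ ≤ α} → E, Continuous F ∧ (∀ x, F x ≠ 0) ∧
        ∀ x : {x : K // ‖f x‖ ≤ α}, ‖f (x : K)‖ = α → F x = f (x : K)) ↔
      ∃ F : K → E, Continuous F ∧ (∀ x, ‖f x‖ ≤ α → F x ≠ 0) ∧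
        ∀ x, ‖f x‖ = α → F x = f x := by
  constructor
  · rintro ⟨F, hF, hF0, hFf⟩
    obtain ⟨G, hG⟩ := (⟨F, hF⟩ : C({x : K | ‖f x‖ ≤ α}, E)).exists_restrict_eq
      (isClosed_le hf.norm continuous_const)
    have hGF : ∀ x (hx : ‖f x‖ ≤ α), G x = F ⟨x, hx⟩ := fun x hx =>
      ContinuousMap.congr_fun hG ⟨x, hx⟩
    exact ⟨G, G.continuous, fun x hx => hGF x hx ▸ hF0 _,
      fun x hx => (hGF x hx.le).trans (hFf ⟨x, hx.le⟩ hx)⟩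
  · rintro ⟨F, hF, hF0, hFf⟩
    exact ⟨fun x => F x, hF.comp continuous_subtype_val, fun x => hF0 x x.2,
      fun x => hFf x⟩

end Criterion

theorem stmt_9_general {K : Type*} [MetricSpace K]
    {E : Type*} [NormedAddCommGroup E] [NormedSpace ℝ E] [FiniteDimensional ℝ E]
    (f : K → E) (hf : Continuous f) (α : ℝ) (hα : 0 < α) :
    (∀ g : K → E, Continuous g → (∀ x, ‖f x - g x‖ ≤ α) → ∃ x, g x = 0) ↔
      ¬ ∃ F : {x : K // ‖f x‖ ≤ α} → E, Continuous F ∧ (∀ x, F x ≠ 0) ∧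
          ∀ x : {x : K // ‖f x‖ ≤ α}, ‖f (x : K)‖ = α → F x = f (x : K) := by
  rw [exists_sublevelSet_extension_iff hf]
  constructor
  · rintro hrobust ⟨F, hF, hF0, hFf⟩
    obtain ⟨g, hg, hfg, hg0⟩ := exists_rootless_perturbation_of_extension hf hα hF hF0 hFf
    obtain ⟨x, hx⟩ := hrobust g hg hfg
    exact hg0 x hx
  · intro hnoext g hg hfg
    by_contra! hg0
    obtain ⟨F, hF, hF0, hFf⟩ := exists_extension_of_rootless_perturbation hf hα hg hfg hg0
    exact hnoext ⟨F, hF, fun x _ => hF0 x, hFf⟩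

/-- Extendability criterion: `f` has an `α`-robust root iff the restriction of `f`
to the level set `{‖f‖ = α}` admits no nonvanishing continuous extension to the
sublevel set `{‖f‖ ≤ α}`. -/
theorem stmt_9 {K : Type*} [MetricSpace K] [CompactSpace K]
    {E : Type*} [NormedAddCommGroup E] [NormedSpace ℝ E] [FiniteDimensional ℝ E]
    (f : K → E) (hf : Continuous f) (hroot : ∃ x, f x = 0) (α : ℝ) (hα : 0 < α) :
    (∀ g : K → E, Continuous g → (∀ x, ‖f x - g x‖ ≤ α) → ∃ x, g x = 0) ↔
      ¬ ∃ F : {x : K // ‖f x‖ ≤ α} → E, Continuous F ∧ (∀ x, F x ≠ 0) ∧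
          ∀ x : {x : K // ‖f x‖ ≤ α}, ‖f (x : K)‖ = α → F x = f (x : K) :=
  stmt_9_general f hf α hα
end

section
/- Let K be a compact space, f : K → ℝⁿ continuous, α > 0, and suppose there exists a continuous extension F : {x : ‖f(x)‖ ≤ α} → ℝⁿ \ {0} of the restriction of f to {x : ‖f(x)‖ = α}. Then there exists a continuous α-perturbation g : K → ℝⁿ of f with no root, obtained by rescaling F by a suitable positive continuous scalar function and gluing with f outside the sublevel set. -/
/-!
On the sublevel set `A = {‖f‖ ≤ α}` put `a = α - ‖f‖ ≥ 0` and `b = ‖f - F‖ - ‖f‖`. For a scalar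
`0 < c ≤ 1` we have `‖f - c • F‖ ≤ ‖f‖ + c * b`, so `c • F` is an `α`-perturbation of `f` on `A`
as soon as `c * b ≤ a`. Such a `c` can be chosen continuous and equal to `1` where `a = 0`,
because there `F = f` and hence `b = -α < 0`. Gluing `c • F` on `A` with `f` off `A` gives the
required perturbation: it agrees with `f` on `{‖f‖ = α}` and has no root, since `F` has none
and `‖f‖ > α > 0` off `A`.
-/

/-- Equals `1` for `b ≤ 0` and `a / (a + b)` for `b > 0`; written this way the denominator stays
positive (hence the function continuous) wherever `0 < a ∨ b < 0`. -/
noncomputable def shrinkFactor (a b : ℝ) : ℝ :=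
  (a + max (-b) 0) / (a + |b|)

section shrinkFactor

variable {a b : ℝ}

lemma shrinkFactor_denom_pos (h : 0 < a ∨ b < 0) (ha : 0 ≤ a) : 0 < a + |b| := by
  rcases h with h | h
  · positivity
  · have := abs_pos.2 h.ne
    linarith

lemma shrinkFactor_of_nonpos (hb : b ≤ 0) (h : 0 < a ∨ b < 0) (ha : 0 ≤ a) :
    shrinkFactor a b = 1 := by
  have hd := shrinkFactor_denom_pos h ha
  rw [abs_of_nonpos hb] at hd
  rw [shrinkFactor, abs_of_nonpos hb, max_eq_left (neg_nonneg.2 hb), div_self hd.ne']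

lemma shrinkFactor_of_pos (hb : 0 < b) : shrinkFactor a b = a / (a + b) := by
  rw [shrinkFactor, abs_of_pos hb, max_eq_right (by linarith), add_zero]

lemma shrinkFactor_pos (h : 0 < a ∨ b < 0) (ha : 0 ≤ a) : 0 < shrinkFactor a b := by
  rcases le_or_gt b 0 with hb | hb
  · rw [shrinkFactor_of_nonpos hb h ha]
    exact one_pos
  · have ha' : 0 < a := h.resolve_right hb.not_gt
    rw [shrinkFactor_of_pos hb]
    positivity

lemma shrinkFactor_le_one (ha : 0 ≤ a) : shrinkFactor a b ≤ 1 :=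
  div_le_one_of_le₀ (by gcongr; exact max_le (neg_le_abs b) (abs_nonneg b)) (by positivity)

lemma shrinkFactor_mul_le (h : 0 < a ∨ b < 0) (ha : 0 ≤ a) : shrinkFactor a b * b ≤ a := by
  rcases le_or_gt b 0 with hb | hb
  · rw [shrinkFactor_of_nonpos hb h ha]
    linarith
  · rw [shrinkFactor_of_pos hb, div_mul_eq_mul_div, div_le_iff₀ (by positivity)]
    nlinarith

lemma Continuous.shrinkFactor {X : Type*} [TopologicalSpace X] {a b : X → ℝ}
    (hac : Continuous a) (hbc : Continuous b) (h : ∀ x, 0 < a x ∨ b x < 0) (ha : ∀ x, 0 ≤ a x) :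
    Continuous fun x => _root_.shrinkFactor (a x) (b x) :=
  (hac.add (hbc.neg.max continuous_const)).div (hac.add hbc.abs)
    fun x => (shrinkFactor_denom_pos (h x) (ha x)).ne'

end shrinkFactor

lemma norm_sub_smul_le {E : Type*} [SeminormedAddCommGroup E] [NormedSpace ℝ E] (v w : E)
    {c : ℝ} (hc0 : 0 ≤ c) (hc1 : c ≤ 1) : ‖v - c • w‖ ≤ ‖v‖ + c * (‖v - w‖ - ‖v‖) :=
  calc ‖v - c • w‖ = ‖(1 - c) • v + c • (v - w)‖ := by congr 1; module
    _ ≤ (1 - c) * ‖v‖ + c * ‖v - w‖ := by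
      refine (norm_add_le _ _).trans_eq ?_
      rw [norm_smul, norm_smul, Real.norm_of_nonneg (by linarith), Real.norm_of_nonneg hc0]
    _ = ‖v‖ + c * (‖v - w‖ - ‖v‖) := by ring

lemma continuous_dite_le_of_eq {X Y : Type*} [TopologicalSpace X] [TopologicalSpace Y]
    {u : X → ℝ} {α : ℝ} {G : {x // u x ≤ α} → Y} {f : X → Y} (hu : Continuous u)
    (hG : Continuous G) (hf : Continuous f) (hGf : ∀ x (hx : u x = α), G ⟨x, hx.le⟩ = f x) :
    Continuous fun x => if h : u x ≤ α then G ⟨x, h⟩ else f x := by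
  set g := fun x => if h : u x ≤ α then G ⟨x, h⟩ else f x
  have hgA : ContinuousOn g {x | u x ≤ α} := by
    rw [continuousOn_iff_continuous_domRestrict]
    refine hG.congr fun x => ?_
    simp [g, x.2]
  convert continuous_if_le hu continuous_const hgA hf.continuousOn
    fun x hx => by simp [g, hx, hGf x hx] using 1
  ext x
  by_cases hx : u x ≤ α <;> simp [g, hx]

theorem stmt_10_general {K : Type*} [MetricSpace K]
    {E : Type*} [NormedAddCommGroup E] [NormedSpace ℝ E]
    (f : K → E) (hf : Continuous f) (α : ℝ) (hα : 0 < α)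
    (F : {x : K // ‖f x‖ ≤ α} → E) (hFc : Continuous F) (hFnz : ∀ x, F x ≠ 0)
    (hFext : ∀ x : {x : K // ‖f x‖ ≤ α}, ‖f (x : K)‖ = α → F x = f (x : K)) :
    ∃ g : K → E, Continuous g ∧ (∀ x, ‖f x - g x‖ ≤ α) ∧ ∀ x, g x ≠ 0 := by
  set a : {x : K // ‖f x‖ ≤ α} → ℝ := fun x => α - ‖f x‖
  set b : {x : K // ‖f x‖ ≤ α} → ℝ := fun x => ‖f x - F x‖ - ‖f x‖
  have ha : ∀ x, 0 ≤ a x := fun x => sub_nonneg.2 x.2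
  have hab : ∀ x, 0 < a x ∨ b x < 0 := by
    intro x
    refine (ha x).lt_or_eq.imp_right fun hx => ?_
    have hfx : ‖f x‖ = α := by linarith [show a x = α - ‖f x‖ from rfl]
    simp [b, hFext x hfx, hfx, hα]
  set c := fun x => shrinkFactor (a x) (b x)
  have hc : Continuous c := by
    have hfA : Continuous fun x : {x : K // ‖f x‖ ≤ α} => f x := hf.comp continuous_subtype_val
    exact .shrinkFactor (continuous_const.sub hfA.norm) ((hfA.sub hFc).norm.sub hfA.norm) hab ha
  refine ⟨fun x => if h : ‖f x‖ ≤ α then c ⟨x, h⟩ • F ⟨x, h⟩ else f x,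
    continuous_dite_le_of_eq hf.norm (hc.smul hFc) hf fun x hx => ?_, fun x => ?_, fun x => ?_⟩
  · have hF := hFext ⟨x, hx.le⟩ hx
    have hc1 : c ⟨x, hx.le⟩ = 1 :=
      shrinkFactor_of_nonpos (by simp [b, hF, hx, hα.le]) (hab _) (ha _)
    rw [Pi.smul_apply', hc1, one_smul, hF]
  · dsimp only
    split_ifs with hx
    · calc ‖f x - c ⟨x, hx⟩ • F ⟨x, hx⟩‖ ≤ ‖f x‖ + c ⟨x, hx⟩ * b ⟨x, hx⟩ :=
            norm_sub_smul_le _ _ (shrinkFactor_pos (hab _) (ha _)).le (shrinkFactor_le_one (ha _))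
        _ ≤ ‖f x‖ + a ⟨x, hx⟩ := by gcongr; exact shrinkFactor_mul_le (hab _) (ha _)
        _ = α := by simp [a]
    · simpa using hα.le
  · dsimp only
    split_ifs with hx
    · exact smul_ne_zero (shrinkFactor_pos (hab _) (ha _)).ne' (hFnz _)
    · intro h0
      exact hx (by simp [h0, hα.le])

/-- If the restriction of `f` to the level set `{‖f‖ = α}` has a nonvanishing
continuous extension to the sublevel set `{‖f‖ ≤ α}`, then there is a continuous
`α`-perturbation of `f` with no root. -/
theorem stmt_10 {K : Type*} [MetricSpace K] [CompactSpace K]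
    {E : Type*} [NormedAddCommGroup E] [NormedSpace ℝ E] [FiniteDimensional ℝ E]
    (f : K → E) (hf : Continuous f) (α : ℝ) (hα : 0 < α)
    (F : {x : K // ‖f x‖ ≤ α} → E) (hFc : Continuous F) (hFnz : ∀ x, F x ≠ 0)
    (hFext : ∀ x : {x : K // ‖f x‖ ≤ α}, ‖f (x : K)‖ = α → F x = f (x : K)) :
    ∃ g : K → E, Continuous g ∧ (∀ x, ‖f x - g x‖ ≤ α) ∧ ∀ x, g x ≠ 0 :=
  stmt_10_general f hf α hα F hFc hFnz hFext
end

section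
/- Let K be a compact space, (f, g) : K → ℝⁿ × ℝᵏ continuous, α > 0, and equip ℝⁿ and ℝᵏ with max-norms. Let U = {x ∈ K : gᵢ(x) ≤ −α for all i = 1,…,k}. Then every α-perturbation (f̃, g̃) of the system f = 0 ∧ g ≤ 0 is satisfiable (i.e., ∃x, f̃(x)=0 and g̃(x) ≤ 0 componentwise) if and only if every continuous α-perturbation h : U → ℝⁿ of f|_U has a root in U. -/
/-!
An `α`-perturbation `h` of `f` on `U` differs from `f` by a map into the closed `α`-ball, which
extends by Tietze to all of `K`; together with `g + α`, whose sublevel set `{g + α ≤ 0}` is exactly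
`U`, this gives an `α`-perturbation of the whole system whose solutions are roots of `h`.
Conversely, every `α`-perturbation `g'` of `g` is nonpositive on `U`, so a root in `U` of the
restriction of `f'` solves the perturbed system.
-/

open Metric

theorem exists_continuous_extension_norm_sub_le {X E : Type*} [TopologicalSpace X] [NormalSpace X]
    [NormedAddCommGroup E] [NormedSpace ℝ E] [FiniteDimensional ℝ E] {s : Set X}
    (hs : IsClosed s) {f : X → E} (hf : Continuous f) {h : s → E} (hh : Continuous h) {α : ℝ}
    (hα : 0 < α) (hfh : ∀ x : s, ‖f x - h x‖ ≤ α) :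
    ∃ F : X → E, Continuous F ∧ (∀ x : s, F x = h x) ∧ ∀ x, ‖f x - F x‖ ≤ α := by
  have := instTietzeExtensionClosedBall ℝ (0 : E) hα
  let d : C(s, E) := ⟨fun x ↦ h x - f x, hh.sub (hf.comp continuous_subtype_val)⟩
  have hd : ∀ x, d x ∈ closedBall 0 α := fun x ↦ by
    simpa [d, norm_sub_rev] using hfh x
  obtain ⟨D, hDα, hDs⟩ := d.exists_forall_mem_restrict_eq hs hd
  refine ⟨fun x ↦ f x + D x, hf.add D.continuous, fun x ↦ ?_, fun x ↦ ?_⟩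
  · have : D x = h x - f x := congr($hDs x)
    simp [this]
  · simpa using hDα x

theorem Pi.nonpos_of_norm_sub_le_of_le_neg {ι : Type*} [Fintype ι] {v w : ι → ℝ} {α : ℝ}
    (hvw : ‖v - w‖ ≤ α) (hv : ∀ i, v i ≤ -α) (i : ι) : w i ≤ 0 := by
  have := (norm_le_pi_norm (v - w) i).trans hvw
  rw [Pi.sub_apply, Real.norm_eq_abs, abs_le] at this
  linarith [hv i, this.1]

theorem Pi.norm_sub_add_const_le {ι : Type*} [Fintype ι] (v : ι → ℝ) {α : ℝ} (hα : 0 ≤ α) :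
    ‖v - (v + fun _ ↦ α)‖ ≤ α := by
  rw [sub_add_cancel_left, norm_neg]
  simpa [abs_of_nonneg hα] using pi_norm_const_le (ι := ι) α

theorem stmt_11_general {K : Type*} [MetricSpace K] (n k : ℕ)
    (f : K → Fin n → ℝ) (g : K → Fin k → ℝ) (hf : Continuous f) (hg : Continuous g)
    (α : ℝ) (hα : 0 < α) :
    (∀ (f' : K → Fin n → ℝ) (g' : K → Fin k → ℝ), Continuous f' → Continuous g' →
        (∀ x, ‖f x - f' x‖ ≤ α) → (∀ x, ‖g x - g' x‖ ≤ α) →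
        ∃ x, f' x = 0 ∧ ∀ i, g' x i ≤ 0) ↔
      (∀ h : {x : K // ∀ i, g x i ≤ -α} → Fin n → ℝ, Continuous h →
        (∀ x : {x : K // ∀ i, g x i ≤ -α}, ‖f (x : K) - h x‖ ≤ α) →
        ∃ x, h x = 0) := by
  constructor
  · intro H h hh hfh
    have hU : IsClosed {x | ∀ i, g x i ≤ -α} := isClosed_le hg continuous_const
    obtain ⟨F, hF, hFh, hfF⟩ := exists_continuous_extension_norm_sub_le hU hf hh hα hfh
    obtain ⟨x, hFx, hgx⟩ := H F (fun x ↦ g x + fun _ ↦ α) hF (hg.add continuous_const) hfF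
      fun x ↦ Pi.norm_sub_add_const_le (g x) hα.le
    have hxU : ∀ i, g x i ≤ -α := fun i ↦ by
      have := hgx i
      rw [Pi.add_apply] at this
      linarith
    exact ⟨⟨x, hxU⟩, (hFh ⟨x, hxU⟩).symm.trans hFx⟩
  · intro H f' g' hf' _ hff' hgg'
    obtain ⟨x, hx⟩ := H (fun x ↦ f' x) (hf'.comp continuous_subtype_val) fun x ↦ hff' x
    exact ⟨x, hx, Pi.nonpos_of_norm_sub_le_of_le_neg (hgg' x) x.2⟩

/-- Inequality reduction (max-norms): every `α`-perturbation of the system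
`f = 0 ∧ g ≤ 0` is satisfiable iff every continuous `α`-perturbation of `f`
restricted to `U = {x | g x ≤ -α}` has a root in `U`. -/
theorem stmt_11 {K : Type*} [MetricSpace K] [CompactSpace K] (n k : ℕ)
    (f : K → Fin n → ℝ) (g : K → Fin k → ℝ) (hf : Continuous f) (hg : Continuous g)
    (α : ℝ) (hα : 0 < α) :
    (∀ (f' : K → Fin n → ℝ) (g' : K → Fin k → ℝ), Continuous f' → Continuous g' →
        (∀ x, ‖f x - f' x‖ ≤ α) → (∀ x, ‖g x - g' x‖ ≤ α) →
        ∃ x, f' x = 0 ∧ ∀ i, g' x i ≤ 0) ↔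
      (∀ h : {x : K // ∀ i, g x i ≤ -α} → Fin n → ℝ, Continuous h →
        (∀ x : {x : K // ∀ i, g x i ≤ -α}, ‖f (x : K) - h x‖ ≤ α) →
        ∃ x, h x = 0) :=
  stmt_11_general n k f g hf hg α hα
end
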